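/- Let n ≥ 3, b > 0, c > 0, α ∈ (0,1), and let v(x) = xₙ - b + c·|x - b·eₙ|^{2-n}. Then there exists M > 0 depending only on n, b, c, α such that: if u is continuously differentiable on an open set U ⊂ {xₙ > 0} \ B_M and satisfies |∇u(x) - ∇v(x)| ≤ |x|^{-n-α} on U, then ∂_{x₁} u(x) < 0 at every x ∈ U with x₁ ≥ 1/2. -/
import Mathlib
set_option maxHeartbeats 1000000

open Real InnerProductSpace

lemma grad_v_coord (n : ℕ) (b c : ℝ) (i j : Fin n) (hij : j ≠ i)
    (x : EuclideanSpace ℝ (Fin n))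
    (hx : x ≠ b • EuclideanSpace.single i (1:ℝ)) :
    gradient (fun y : EuclideanSpace ℝ (Fin n) =>
        y i - b + c * ‖y - b • EuclideanSpace.single i (1:ℝ)‖ ^ ((2:ℝ) - (n:ℝ))) x j
      = c * ((2:ℝ) - (n:ℝ))
          * ‖x - b • EuclideanSpace.single i (1:ℝ)‖ ^ (-(n:ℝ)) * x j := by
  set a : EuclideanSpace ℝ (Fin n) := b • EuclideanSpace.single i (1:ℝ) with ha
  set p : ℝ := (2:ℝ) - (n:ℝ) with hp
  have hw : x - a ≠ 0 := sub_ne_zero.mpr hx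
  have hr : (0:ℝ) < ‖x - a‖ := norm_pos_iff.mpr hw
  -- rewrite rpow of norm as rpow of norm squared
  have hfun : (fun y : EuclideanSpace ℝ (Fin n) => y i - b + c * ‖y - a‖ ^ p)
      = fun y : EuclideanSpace ℝ (Fin n) => y i - b + c * (‖y - a‖ ^ 2) ^ (p / 2) := by
    funext y
    congr 1
    congr 1
    rw [← Real.rpow_natCast ‖y - a‖ 2, ← Real.rpow_mul (norm_nonneg _)]
    congr 1
    ring
  -- derivative chain
  have h1 : HasFDerivAt (fun y : EuclideanSpace ℝ (Fin n) => y - a) (ContinuousLinearMap.id ℝ (EuclideanSpace ℝ (Fin n))) x :=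
    (hasFDerivAt_id x).sub_const a
  have h2 : HasFDerivAt (fun y : EuclideanSpace ℝ (Fin n) => ‖y - a‖ ^ 2)
      (2 • (innerSL ℝ (x - a))) x := by
    simpa using h1.norm_sq
  have h3 : HasFDerivAt (fun y : EuclideanSpace ℝ (Fin n) => (‖y - a‖ ^ 2) ^ (p / 2))
      ((p / 2 * (‖x - a‖ ^ 2) ^ (p / 2 - 1)) • (2 • (innerSL ℝ (x - a)))) x :=
    h2.rpow_const (Or.inl (pow_ne_zero _ (norm_ne_zero_iff.mpr hw)))
  have h4 := (h3.const_mul c)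
  have h5 : HasFDerivAt (fun y : EuclideanSpace ℝ (Fin n) => y i - b) (EuclideanSpace.proj i : EuclideanSpace ℝ (Fin n) →L[ℝ] ℝ) x := by
    exact ((EuclideanSpace.proj (𝕜 := ℝ) i).hasFDerivAt).sub_const b
  have h6 := h5.add h4
  set L : EuclideanSpace ℝ (Fin n) →L[ℝ] ℝ := (EuclideanSpace.proj i : EuclideanSpace ℝ (Fin n) →L[ℝ] ℝ)
      + c • ((p / 2 * (‖x - a‖ ^ 2) ^ (p / 2 - 1)) • (2 • (innerSL ℝ (x - a)))) with hL
  have h7 : HasFDerivAt (fun y : EuclideanSpace ℝ (Fin n) => y i - b + c * ‖y - a‖ ^ p) L x := by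
    rw [hfun]; exact h6
  have h8 : gradient (fun y : EuclideanSpace ℝ (Fin n) => y i - b + c * ‖y - a‖ ^ p) x
      = (InnerProductSpace.toDual ℝ (EuclideanSpace ℝ (Fin n))).symm L :=
    (hasFDerivAt_iff_hasGradientAt.mp h7).gradient
  rw [h8]
  have h9 : ((InnerProductSpace.toDual ℝ (EuclideanSpace ℝ (Fin n))).symm L) j
      = L (EuclideanSpace.single j (1:ℝ)) := by
    rw [← InnerProductSpace.toDual_symm_apply]
    rw [EuclideanSpace.inner_single_right]
    simp
  rw [h9, hL]
  have hsj : (EuclideanSpace.single j (1:ℝ)) i = 0 := by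
    simp [EuclideanSpace.single_apply, hij.symm, (Fin.ne_iff_vne j i).mp hij]
  have haj : a j = 0 := by
    simp [ha, EuclideanSpace.single_apply, hij]
  have hinner : ⟪x - a, EuclideanSpace.single j (1:ℝ)⟫_ℝ = x j := by
    rw [EuclideanSpace.inner_single_right]
    simp [haj]
  simp only [ContinuousLinearMap.add_apply, ContinuousLinearMap.smul_apply,
    ContinuousLinearMap.coe_smul', Pi.smul_apply, innerSL_apply_apply, smul_eq_mul]
  rw [hinner]
  have hps : (‖x - a‖ ^ 2) ^ (p / 2 - 1) = ‖x - a‖ ^ (-(n:ℝ)) := by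
    rw [← Real.rpow_natCast ‖x - a‖ 2, ← Real.rpow_mul (norm_nonneg _)]
    congr 1
    push_cast [hp]
    ring
  have hproj : (EuclideanSpace.proj i) (EuclideanSpace.single j (1:ℝ))
      = (EuclideanSpace.single j (1:ℝ)) i := rfl
  rw [hproj, hsj, hps]
  ring

lemma coord_le_norm (n : ℕ) (d : EuclideanSpace ℝ (Fin n)) (j : Fin n) : d j ≤ ‖d‖ := by
  have h1 : ⟪d, EuclideanSpace.single j (1:ℝ)⟫_ℝ = d j := by
    rw [EuclideanSpace.inner_single_right]; simp
  have h2 := real_inner_le_norm d (EuclideanSpace.single j (1:ℝ))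
  rw [h1, EuclideanSpace.norm_single] at h2
  simpa using h2

theorem stmt14 (n : ℕ) (hn : 3 ≤ n) (b c α : ℝ) (hb : 0 < b) (hc : 0 < c)
    (hα : 0 < α ∧ α < 1) :
    ∃ M : ℝ, 0 < M ∧
      ∀ U : Set (EuclideanSpace ℝ (Fin n)), IsOpen U →
        U ⊆ {x : EuclideanSpace ℝ (Fin n) | 0 < x ⟨n - 1, by omega⟩} \ Metric.ball 0 M →
        ∀ u : EuclideanSpace ℝ (Fin n) → ℝ, ContDiffOn ℝ 1 u U →
          (∀ x ∈ U,
            ‖gradient u x - gradient (fun y : EuclideanSpace ℝ (Fin n) =>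
                y ⟨n - 1, by omega⟩ - b
                  + c * ‖y - b • EuclideanSpace.single (⟨n - 1, by omega⟩ : Fin n) (1:ℝ)‖
                      ^ ((2:ℝ) - (n:ℝ))) x‖
              ≤ ‖x‖ ^ (-(n:ℝ) - α)) →
          ∀ x ∈ U, 1 / 2 ≤ x ⟨0, by omega⟩ → gradient u x ⟨0, by omega⟩ < 0 := by
  obtain ⟨hα0, hα1⟩ := hα
  have hn2 : (0:ℝ) < (n:ℝ) - 2 := by
    have : (3:ℝ) ≤ (n:ℝ) := by exact_mod_cast hn
    linarith
  set K : ℝ := c * ((n:ℝ) - 2) * (2:ℝ) ^ (-(n:ℝ) - 1) with hKdef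
  have hK : 0 < K := by
    have : (0:ℝ) < (2:ℝ) ^ (-(n:ℝ) - 1) := Real.rpow_pos_of_pos (by norm_num) _
    positivity
  set M : ℝ := max (b + 1) ((1 / K) ^ (1 / α) + 1) with hMdef
  have hM1 : b + 1 ≤ M := le_max_left _ _
  have hM2 : (1 / K) ^ (1 / α) + 1 ≤ M := le_max_right _ _
  have hM0 : 0 < M := lt_of_lt_of_le (by linarith) hM1
  have hMK : M ^ (-α) < K := by
    have h1 : (1 / K) ^ (1 / α) < M := by
      have : (0:ℝ) ≤ (1 / K) ^ (1 / α) := Real.rpow_nonneg (by positivity) _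
      linarith
    have h2 : (1 / K) ^ ((1 / α) * α) < M ^ α := by
      rw [Real.rpow_mul (by positivity)]
      exact Real.rpow_lt_rpow (Real.rpow_nonneg (by positivity) _) h1 hα0
    rw [one_div_mul_cancel (ne_of_gt hα0), Real.rpow_one] at h2
    rw [Real.rpow_neg hM0.le]
    have hMα : 0 < M ^ α := Real.rpow_pos_of_pos hM0 _
    rw [inv_lt_iff_one_lt_mul₀ hMα]
    have h3 : K * (1 / K) = 1 := by field_simp
    nlinarith [mul_lt_mul_of_pos_left h2 hK, h3]
  refine ⟨M, hM0, ?_⟩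
  intro U hUopen hUsub u hu hbound x hxU hx0
  set i : Fin n := ⟨n - 1, by omega⟩
  set j : Fin n := ⟨0, by omega⟩
  have hij : j ≠ i := by
    simp only [i, j, Fin.ne_iff_vne]
    omega
  obtain ⟨-, hxball⟩ := hUsub hxU
  have hMx : M ≤ ‖x‖ := by
    have := hxball
    rw [Metric.mem_ball, dist_zero_right] at this
    exact not_lt.mp this
  have hx_pos : 0 < ‖x‖ := lt_of_lt_of_le hM0 hMx
  set a : EuclideanSpace ℝ (Fin n) := b • EuclideanSpace.single i (1:ℝ) with ha
  have hna : ‖a‖ = b := by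
    rw [ha, norm_smul, EuclideanSpace.norm_single]
    simp [abs_of_pos hb]
  have hxa : x ≠ a := by
    intro h
    rw [h] at hMx
    rw [hna] at hMx
    linarith
  set r : ℝ := ‖x - a‖ with hrdef
  have hr : 0 < r := norm_pos_iff.mpr (sub_ne_zero.mpr hxa)
  have hr2 : r ≤ 2 * ‖x‖ := by
    calc r ≤ ‖x‖ + ‖a‖ := norm_sub_le _ _
    _ = ‖x‖ + b := by rw [hna]
    _ ≤ ‖x‖ + ‖x‖ := by linarith
    _ = 2 * ‖x‖ := by ring
  have hgv := grad_v_coord n b c i j hij x hxa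
  have hb1 := hbound x hxU
  -- coordinate bound
  have hco : gradient u x j - gradient (fun y : EuclideanSpace ℝ (Fin n) =>
      y i - b + c * ‖y - a‖ ^ ((2:ℝ) - (n:ℝ))) x j ≤ ‖x‖ ^ (-(n:ℝ) - α) := by
    set g := gradient (fun y : EuclideanSpace ℝ (Fin n) =>
      y i - b + c * ‖y - a‖ ^ ((2:ℝ) - (n:ℝ))) x
    have h1 : gradient u x j - g j = (gradient u x - g) j := rfl
    rw [h1]
    exact le_trans (coord_le_norm n _ j) hb1
  rw [hgv] at hco
  -- assemble
  have key1 : c * ((2:ℝ) - (n:ℝ)) * r ^ (-(n:ℝ)) * x j ≤ -(K * ‖x‖ ^ (-(n:ℝ))) := by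
    have hrn : 0 < r ^ (-(n:ℝ)) := Real.rpow_pos_of_pos hr _
    have hxj : (1:ℝ)/2 ≤ x j := hx0
    have e1 : c * ((2:ℝ) - (n:ℝ)) * r ^ (-(n:ℝ)) * x j
        ≤ c * ((2:ℝ) - (n:ℝ)) * r ^ (-(n:ℝ)) * (1/2) := by
      have hneg : c * ((2:ℝ) - (n:ℝ)) * r ^ (-(n:ℝ)) ≤ 0 := by
        nlinarith [mul_pos hc hrn]
      exact mul_le_mul_of_nonpos_left hxj hneg
    have e2 : (2 * ‖x‖) ^ (-(n:ℝ)) ≤ r ^ (-(n:ℝ)) :=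
      Real.rpow_le_rpow_of_nonpos hr hr2 (neg_nonpos.mpr (by positivity))
    have e3 : (2 * ‖x‖) ^ (-(n:ℝ)) = (2:ℝ) ^ (-(n:ℝ)) * ‖x‖ ^ (-(n:ℝ)) :=
      Real.mul_rpow (by norm_num) hx_pos.le
    have e4 : c * ((2:ℝ) - (n:ℝ)) * r ^ (-(n:ℝ)) * (1/2)
        ≤ c * ((2:ℝ) - (n:ℝ)) * ((2:ℝ) ^ (-(n:ℝ)) * ‖x‖ ^ (-(n:ℝ))) * (1/2) := by
      rw [← e3]
      have hcn : c * ((2:ℝ) - (n:ℝ)) * (1/2) ≤ 0 := by nlinarith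
      nlinarith [e2, Real.rpow_pos_of_pos (by positivity : (0:ℝ) < 2 * ‖x‖) (-(n:ℝ))]
    have e5 : c * ((2:ℝ) - (n:ℝ)) * ((2:ℝ) ^ (-(n:ℝ)) * ‖x‖ ^ (-(n:ℝ))) * (1/2)
        = -(K * ‖x‖ ^ (-(n:ℝ))) := by
      rw [hKdef]
      have : (2:ℝ) ^ (-(n:ℝ) - 1) = (2:ℝ) ^ (-(n:ℝ)) * (2:ℝ) ^ (-(1:ℝ)) := by
        rw [← Real.rpow_add (by norm_num)]
        ring_nf
      rw [this, Real.rpow_neg_one]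
      ring
    linarith
  have key2 : ‖x‖ ^ (-(n:ℝ) - α) < K * ‖x‖ ^ (-(n:ℝ)) := by
    have e1 : ‖x‖ ^ (-(n:ℝ) - α) = ‖x‖ ^ (-(n:ℝ)) * ‖x‖ ^ (-α) := by
      rw [← Real.rpow_add hx_pos]
      ring_nf
    have e2 : ‖x‖ ^ (-α) ≤ M ^ (-α) :=
      Real.rpow_le_rpow_of_nonpos hM0 hMx (by linarith)
    have hxn : 0 < ‖x‖ ^ (-(n:ℝ)) := Real.rpow_pos_of_pos hx_pos _
    calc ‖x‖ ^ (-(n:ℝ) - α) = ‖x‖ ^ (-(n:ℝ)) * ‖x‖ ^ (-α) := e1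
    _ ≤ ‖x‖ ^ (-(n:ℝ)) * M ^ (-α) := by nlinarith
    _ < ‖x‖ ^ (-(n:ℝ)) * K := by nlinarith
    _ = K * ‖x‖ ^ (-(n:ℝ)) := by ring
  have : gradient u x j ≤ c * ((2:ℝ) - (n:ℝ)) * r ^ (-(n:ℝ)) * x j + ‖x‖ ^ (-(n:ℝ) - α) := by
    linarith
  calc gradient u x j ≤ c * ((2:ℝ) - (n:ℝ)) * r ^ (-(n:ℝ)) * x j + ‖x‖ ^ (-(n:ℝ) - α) := this
  _ < -(K * ‖x‖ ^ (-(n:ℝ))) + K * ‖x‖ ^ (-(n:ℝ)) := by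
      have := key1; have := key2; linarith
  _ = 0 := by ring
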